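/- arXiv:2005.14033 — 2 statements merged into one kernel-verified Lean document; each statement's English description precedes it below -/
import Mathlib

section
/- Let F be an integrable random variable on a probability space, let Z and Z' be random variables, and let A be an event measurable with respect to both σ(Z) and σ(Z'). If Z' · 1_A = Z · 1_A almost surely, then E[F | σ(Z')] · 1_A = E[F | σ(Z)] · 1_A almost surely. -/
/-! On `A` both sides are conditional expectations of `1_A F`, so it suffices to show
`E[1_A F | σ(Z)] = E[1_A F | σ(Z')]` a.e. By Doob–Dynkin `E[1_A F | σ(Z)] = 1_A · (g ∘ Z)` for a
Borel `g`, which is a.e. equal to the `σ(Z')`-measurable `1_A · (g ∘ Z')`; and its integrals over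
`Z'⁻¹(T)` match those of `1_A F`, because `Z'⁻¹(T) ∩ A` and `Z⁻¹(T) ∩ A` differ by a null set. -/

open MeasureTheory Set

section AgreeOn

variable {Ω β : Type*} [MeasurableSpace Ω] {μ : Measure Ω}
  {Z Z' : Ω → β} {A : Set Ω}

lemma indicator_comp_ae_eq_of_ae_eq_on {E : Type*} [Zero E]
    (hZZ' : ∀ᵐ ω ∂μ, ω ∈ A → Z ω = Z' ω) (g : β → E) :
    A.indicator (g ∘ Z) =ᵐ[μ] A.indicator (g ∘ Z') := by
  filter_upwards [hZZ'] with ω hω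
  by_cases hωA : ω ∈ A
  · simp only [indicator_of_mem hωA, Function.comp_apply, hω hωA]
  · simp only [indicator_of_notMem hωA]

lemma preimage_inter_ae_eq_of_ae_eq_on (hZZ' : ∀ᵐ ω ∂μ, ω ∈ A → Z ω = Z' ω) (T : Set β) :
    (Z ⁻¹' T ∩ A : Set Ω) =ᵐ[μ] (Z' ⁻¹' T ∩ A : Set Ω) := by
  rw [Filter.eventuallyEq_set]
  filter_upwards [hZZ'] with ω hω
  simp only [mem_inter_iff, mem_preimage]
  exact and_congr_left fun hωA => by rw [hω hωA]

lemma aestronglyMeasurable_comap_indicator_of_ae_eq_on [mβ : MeasurableSpace β]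
    [StandardBorelSpace β] {E : Type*} [NormedAddCommGroup E] [CompleteSpace E]
    (hZZ' : ∀ᵐ ω ∂μ, ω ∈ A → Z ω = Z' ω) (hAZ' : MeasurableSet[mβ.comap Z'] A)
    {h : Ω → E} (hh : StronglyMeasurable[mβ.comap Z] h) :
    AEStronglyMeasurable[mβ.comap Z'] (A.indicator h) μ := by
  obtain ⟨g, hg, rfl⟩ := hh.exists_eq_measurable_comp
  exact ⟨A.indicator (g ∘ Z'), (hg.comp_measurable (comap_measurable Z')).indicator hAZ',
    indicator_comp_ae_eq_of_ae_eq_on hZZ' g⟩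

lemma condExp_indicator_ae_eq_of_ae_eq_on [mβ : MeasurableSpace β] [StandardBorelSpace β]
    [IsFiniteMeasure μ] {E : Type*} [NormedAddCommGroup E] [NormedSpace ℝ E] [CompleteSpace E]
    (hZ : Measurable Z) (hZ' : Measurable Z')
    (hAZ : MeasurableSet[mβ.comap Z] A) (hAZ' : MeasurableSet[mβ.comap Z'] A)
    (hZZ' : ∀ᵐ ω ∂μ, ω ∈ A → Z ω = Z' ω) {f : Ω → E} (hf : Integrable f μ) :
    μ[A.indicator f | mβ.comap Z] =ᵐ[μ] μ[A.indicator f | mβ.comap Z'] := by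
  have hA : MeasurableSet A := hZ.comap_le A hAZ
  have hsupp := condExp_indicator hf hAZ
  refine ae_eq_condExp_of_forall_setIntegral_eq hZ'.comap_le (hf.indicator hA)
    (fun _ _ _ => integrable_condExp.integrableOn) (fun s hs _ => ?_)
    ((aestronglyMeasurable_comap_indicator_of_ae_eq_on hZZ' hAZ'
      stronglyMeasurable_condExp).congr hsupp.symm)
  obtain ⟨T, hT, rfl⟩ := hs
  have hZTA : MeasurableSet[mβ.comap Z] (Z ⁻¹' T ∩ A) :=
    (hT.preimage (comap_measurable Z)).inter hAZ
  calc ∫ ω in Z' ⁻¹' T, (μ[A.indicator f | mβ.comap Z]) ω ∂μ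
      = ∫ ω in Z' ⁻¹' T ∩ A, (μ[f | mβ.comap Z]) ω ∂μ := by
        rw [setIntegral_congr_ae (hZ' hT) (hsupp.mono fun _ h _ => h), setIntegral_indicator hA]
    _ = ∫ ω in Z ⁻¹' T ∩ A, f ω ∂μ := by
        rw [← setIntegral_congr_set (preimage_inter_ae_eq_of_ae_eq_on hZZ' T),
          setIntegral_condExp hZ.comap_le hf hZTA]
    _ = ∫ ω in Z' ⁻¹' T, A.indicator f ω ∂μ := by
        rw [setIntegral_indicator hA,
          setIntegral_congr_set (preimage_inter_ae_eq_of_ae_eq_on hZZ' T)]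

end AgreeOn

/-- If `A` is measurable w.r.t. both `σ(Z)` and `σ(Z')`, and `Z' 1_A = Z 1_A` a.s.,
then `E[F|σ(Z')] 1_A = E[F|σ(Z)] 1_A` a.s. -/
theorem stmt0 {Ω : Type*} [MeasurableSpace Ω] {P : Measure Ω} [IsProbabilityMeasure P]
    (F Z Z' : Ω → ℝ) (hF : Integrable F P) (hZ : Measurable Z) (hZ' : Measurable Z')
    (A : Set Ω)
    (hAZ : MeasurableSet[MeasurableSpace.comap Z (borel ℝ)] A)
    (hAZ' : MeasurableSet[MeasurableSpace.comap Z' (borel ℝ)] A)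
    (h : ∀ᵐ ω ∂P, Z' ω * A.indicator (fun _ => (1:ℝ)) ω = Z ω * A.indicator (fun _ => (1:ℝ)) ω) :
    ∀ᵐ ω ∂P,
      (P[F | MeasurableSpace.comap Z' (borel ℝ)]) ω * A.indicator (fun _ => (1:ℝ)) ω =
      (P[F | MeasurableSpace.comap Z (borel ℝ)]) ω * A.indicator (fun _ => (1:ℝ)) ω := by
  have hZZ' : ∀ᵐ ω ∂P, ω ∈ A → Z ω = Z' ω := by
    filter_upwards [h] with ω hω hωA
    simpa [indicator_of_mem hωA] using hω.symm
  filter_upwards [condExp_indicator hF hAZ, condExp_indicator hF hAZ',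
    condExp_indicator_ae_eq_of_ae_eq_on hZ hZ' hAZ hAZ' hZZ' hF] with ω hω hω' hωZZ'
  simp only [← indicator_mul_right, mul_one, ← hω, ← hω']
  exact hωZZ'.symm
end

section
/- Let μ₀ be a finite measure on ℝ, u₀ a μ₀-integrable function, t > 0, and suppose x satisfies: x equals the μ₀-average of a ↦ a + t·u₀(a) over the interval [α, β] with α < β and μ₀([α,β]) > 0, and also x = α + t·u₀(α) = β + t·u₀(β). Define u_t(x) = (∫_{[α,β]} u₀ dμ₀)/μ₀([α,β]). Then u₀(β) ≤ u_t(x) ≤ u₀(α). -/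
/-!
Averaging `a ↦ a + t u₀ a` over `[α, β]` gives `x = ā + t v`, where `ā` is the barycenter of `μ₀`
on `[α, β]` and `v` the mean velocity. Since `α ≤ ā ≤ β`, comparing with `x = β + t u₀ β` and
`x = α + t u₀ α` and dividing by `t > 0` squeezes `v` between `u₀ β` and `u₀ α`.
-/

open MeasureTheory Set

theorem setIntegral_div_measure_toReal_mem_Icc {X : Type*} [MeasurableSpace X] {μ : Measure X}
    {s : Set X} {f : X → ℝ} {a b : ℝ} (h0 : μ s ≠ 0) (hfin : μ s ≠ ⊤)
    (hf : ∀ᵐ x ∂μ.restrict s, f x ∈ Icc a b) (hint : IntegrableOn f s μ) :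
    (∫ x in s, f x ∂μ) / (μ s).toReal ∈ Icc a b := by
  have := (convex_Icc a b).set_average_mem isClosed_Icc h0 hfin hf hint
  rwa [setAverage_eq, smul_eq_mul, inv_mul_eq_div, measureReal_def] at this

theorem setIntegral_add_const_mul_div {X : Type*} [MeasurableSpace X] {μ : Measure X} {s : Set X}
    {f g : X → ℝ} (hf : IntegrableOn f s μ) (hg : IntegrableOn g s μ) (t m : ℝ) :
    (∫ x in s, (f x + t * g x) ∂μ) / m = (∫ x in s, f x ∂μ) / m + t * ((∫ x in s, g x ∂μ) / m) := by
  rw [integral_add hf (hg.const_mul t), integral_const_mul, add_div, mul_div_assoc]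

theorem stmt10_general (μ₀ : Measure ℝ) [IsFiniteMeasure μ₀] (u₀ : ℝ → ℝ) (t : ℝ) (ht : 0 < t)
    (α β x : ℝ) (hmass : 0 < μ₀ (Icc α β))
    (hintu : IntegrableOn u₀ (Icc α β) μ₀)
    (hinta : IntegrableOn (fun a => a) (Icc α β) μ₀)
    (hbar : x = (∫ a in Icc α β, (a + t * u₀ a) ∂μ₀) / (μ₀ (Icc α β)).toReal)
    (hα : x = α + t * u₀ α) (hβ : x = β + t * u₀ β) :
    u₀ β ≤ (∫ a in Icc α β, u₀ a ∂μ₀) / (μ₀ (Icc α β)).toReal ∧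
    (∫ a in Icc α β, u₀ a ∂μ₀) / (μ₀ (Icc α β)).toReal ≤ u₀ α := by
  obtain ⟨hα_le, hle_β⟩ := setIntegral_div_measure_toReal_mem_Icc hmass.ne' (measure_ne_top _ _)
    (ae_restrict_mem measurableSet_Icc) hinta
  rw [setIntegral_add_const_mul_div hinta hintu] at hbar
  exact ⟨le_of_mul_le_mul_left (by linarith) ht, le_of_mul_le_mul_left (by linarith) ht⟩

/-- Velocity ordering of a cluster: if the cluster `[α,β]` collapses to `x` at time `t`
(endpoint conditions and barycenter condition), then the cluster velocity lies between
`u₀(β)` and `u₀(α)`. -/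
theorem stmt10 (μ₀ : Measure ℝ) [IsFiniteMeasure μ₀] (u₀ : ℝ → ℝ) (t : ℝ) (ht : 0 < t)
    (α β x : ℝ) (hαβ : α < β) (hmass : 0 < μ₀ (Icc α β))
    (hintu : IntegrableOn u₀ (Icc α β) μ₀)
    (hinta : IntegrableOn (fun a => a) (Icc α β) μ₀)
    (hbar : x = (∫ a in Icc α β, (a + t * u₀ a) ∂μ₀) / (μ₀ (Icc α β)).toReal)
    (hα : x = α + t * u₀ α) (hβ : x = β + t * u₀ β) :
    u₀ β ≤ (∫ a in Icc α β, u₀ a ∂μ₀) / (μ₀ (Icc α β)).toReal ∧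
    (∫ a in Icc α β, u₀ a ∂μ₀) / (μ₀ (Icc α β)).toReal ≤ u₀ α :=
  stmt10_general μ₀ u₀ t ht α β x hmass hintu hinta hbar hα hβ
end
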